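/- Let S and O be finite nonempty sets. Let M = (r,p), M_I = (r,p_I), and M̂ = (r,p̂) be SMDP models over (S,O) sharing the same reward function r with 0 ≤ r(s,o) ≤ Rmax, with ∑_{s'} p(s,o,s') ≤ γ̄, ∑_{s'} p_I(s,o,s') ≤ γ̄ and ∑_{s'} p̂(s,o,s') ≤ γ̄ for all (s,o) where γ̄ < 1, and with max_{s,o} ∑_{s'} |p(s,o,s') − p_I(s,o,s')| ≤ γ̄ · ζ. Let Q*, Q*_I be Bellman-optimal value functions for M and M_I, let π̂ : S → O be a deterministic policy with value V^{π̂}_M in M and V^{π̂}_{M_I} in M_I, and let V*(s) = max_o Q*(s,o), V*_{M_I}(s) = max_o Q*_I(s,o). If the estimation error satisfies ‖V*_{M_I} − V^{π̂}_{M_I}‖_∞ ≤ ε̂, then ‖V* − V^{π̂}_M‖_∞ ≤ 4 γ̄ ζ Rmax / (1 − γ̄)² + ε̂. -/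

import Mathlib

/-- Maximum of a real-valued function over a finite nonempty type. -/
noncomputable def fmax {α : Type*} [Fintype α] [Nonempty α] (f : α → ℝ) : ℝ :=
  Finset.univ.sup' Finset.univ_nonempty f

/-!
Compare the true model `M` with the intent model `M_I` through the simulation lemma: two
Bellman-type fixed points sharing the reward but with kernels at total-variation distance `δ`
differ in sup norm by at most `δ · Rmax / (1 - γ̄)²`, because the kernel mismatch costs `δ` times
the value bound `Rmax / (1 - γ̄)` per step and the remaining discrepancy is contracted by `γ̄`.
This applies to the optimal `Q`-functions and to the values of `π̂` alike, and the triangle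
inequality through `V*_{M_I}` and `V^{π̂}_{M_I}` gives even `2 γ̄ ζ Rmax / (1 - γ̄)² + ε̂`.
-/

section Fmax

variable {α : Type*} [Fintype α] [Nonempty α]

lemma fmax_le {f : α → ℝ} {c : ℝ} (h : ∀ a, f a ≤ c) : fmax f ≤ c :=
  Finset.sup'_le _ _ fun a _ => h a

lemma le_fmax (f : α → ℝ) (a : α) : f a ≤ fmax f :=
  Finset.le_sup' f (Finset.mem_univ a)

lemma fmax_abs_nonneg (f : α → ℝ) : 0 ≤ fmax fun a => |f a| :=
  (abs_nonneg _).trans (le_fmax (fun a => |f a|) (Classical.arbitrary α))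

lemma abs_fmax_le_fmax_abs (f : α → ℝ) : |fmax f| ≤ fmax fun a => |f a| := by
  obtain ⟨a⟩ := ‹Nonempty α›
  refine abs_le.2 ⟨?_, fmax_le fun b => (le_abs_self _).trans (le_fmax (fun a => |f a|) b)⟩
  linarith [neg_abs_le (f a), le_fmax f a, le_fmax (fun a => |f a|) a]

lemma abs_fmax_sub_fmax_le (f g : α → ℝ) :
    |fmax f - fmax g| ≤ fmax fun a => |f a - g a| := by
  rw [abs_sub_le_iff, sub_le_iff_le_add, sub_le_iff_le_add]
  constructor
  · exact fmax_le fun a => by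
      linarith [le_abs_self (f a - g a), le_fmax (fun a => |f a - g a|) a, le_fmax g a]
  · exact fmax_le fun a => by
      linarith [neg_abs_le (f a - g a), le_fmax (fun a => |f a - g a|) a, le_fmax f a]

lemma fmax_abs_le_div_of_le_add_mul {f : α → ℝ} {C γ : ℝ} (hγ : γ < 1)
    (h : ∀ a, |f a| ≤ C + γ * fmax fun a => |f a|) :
    (fmax fun a => |f a|) ≤ C / (1 - γ) := by
  have hnorm := fmax_le h
  rw [le_div_iff₀ (by linarith)]
  linarith

end Fmax

lemma fmax_slice_le {α β : Type*} [Fintype α] [Fintype β] [Nonempty α] [Nonempty β]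
    (f : α × β → ℝ) (a : α) : (fmax fun b => f (a, b)) ≤ fmax f :=
  fmax_le fun b => le_fmax f (a, b)

lemma abs_fmax_slice_sub_le {α β : Type*} [Fintype α] [Fintype β] [Nonempty α] [Nonempty β]
    (f g : α × β → ℝ) (a : α) :
    |(fmax fun b => f (a, b)) - fmax fun b => g (a, b)| ≤ fmax fun x => |f x - g x| :=
  (abs_fmax_sub_fmax_le _ _).trans (fmax_slice_le (fun x => |f x - g x|) a)

lemma abs_sum_mul_le_sum_abs_mul {S : Type*} [Fintype S] (q v : S → ℝ) {B : ℝ}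
    (hv : ∀ s, |v s| ≤ B) : |∑ s, q s * v s| ≤ (∑ s, |q s|) * B := by
  calc |∑ s, q s * v s| ≤ ∑ s, |q s| * |v s| := by
        simpa only [abs_mul] using Finset.abs_sum_le_sum_abs (fun s => q s * v s) Finset.univ
    _ ≤ ∑ s, |q s| * B :=
        Finset.sum_le_sum fun s _ => mul_le_mul_of_nonneg_left (hv s) (abs_nonneg _)
    _ = (∑ s, |q s|) * B := (Finset.sum_mul _ _ _).symm

lemma abs_sum_mul_le_mul_of_nonneg {S : Type*} [Fintype S] {q v : S → ℝ} {γ B : ℝ}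
    (hq : ∀ s, 0 ≤ q s) (hqγ : ∑ s, q s ≤ γ) (hB : 0 ≤ B) (hv : ∀ s, |v s| ≤ B) :
    |∑ s, q s * v s| ≤ γ * B := by
  have hsum := abs_sum_mul_le_sum_abs_mul q v hv
  simp only [abs_of_nonneg (hq _)] at hsum
  exact hsum.trans (mul_le_mul_of_nonneg_right hqγ hB)

section Bellman

/-! `X i = r i + ∑ s, P i s * v s` is a Bellman equation over `ι` (state–option pairs for
`Q`-functions, states for policy values); `v` is what is read off `X` at the next state
(`max_o Q (s, o)`, or the policy value itself). -/

variable {ι S : Type*} [Fintype ι] [Nonempty ι] [Fintype S]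
  {r X Y : ι → ℝ} {P P' : ι → S → ℝ} {v w : S → ℝ} {R γ δ : ℝ}

lemma fmax_abs_le_of_bellman (hX : ∀ i, X i = r i + ∑ s, P i s * v s)
    (hv : ∀ s, |v s| ≤ fmax fun i => |X i|) (hr : ∀ i, |r i| ≤ R)
    (hP : ∀ i s, 0 ≤ P i s) (hPγ : ∀ i, ∑ s, P i s ≤ γ) (hγ : γ < 1) :
    (fmax fun i => |X i|) ≤ R / (1 - γ) := by
  refine fmax_abs_le_div_of_le_add_mul hγ fun i => ?_
  rw [hX i]
  exact (abs_add_le _ _).trans <| add_le_add (hr i) <|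
    abs_sum_mul_le_mul_of_nonneg (hP i) (hPγ i) (fmax_abs_nonneg X) hv

/-- Simulation lemma. -/
lemma fmax_abs_sub_le_of_bellman (hX : ∀ i, X i = r i + ∑ s, P i s * v s)
    (hY : ∀ i, Y i = r i + ∑ s, P' i s * w s)
    (hv : ∀ s, |v s| ≤ fmax fun i => |X i|)
    (hvw : ∀ s, |v s - w s| ≤ fmax fun i => |X i - Y i|) (hr : ∀ i, |r i| ≤ R)
    (hP : ∀ i s, 0 ≤ P i s) (hP' : ∀ i s, 0 ≤ P' i s)
    (hPγ : ∀ i, ∑ s, P i s ≤ γ) (hP'γ : ∀ i, ∑ s, P' i s ≤ γ) (hγ : γ < 1)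
    (hδ : ∀ i, ∑ s, |P i s - P' i s| ≤ δ) :
    (fmax fun i => |X i - Y i|) ≤ δ * R / (1 - γ) ^ 2 := by
  have hXbound := fmax_abs_le_of_bellman hX hv hr hP hPγ hγ
  have hRγ : 0 ≤ R / (1 - γ) := (fmax_abs_nonneg X).trans hXbound
  have hstep : ∀ i, |X i - Y i| ≤ δ * (R / (1 - γ)) + γ * fmax fun i => |X i - Y i| := by
    intro i
    have hsplit : X i - Y i =
        ∑ s, (P i s - P' i s) * v s + ∑ s, P' i s * (v s - w s) := by
      rw [hX i, hY i, ← Finset.sum_add_distrib, add_sub_add_left_eq_sub,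
        ← Finset.sum_sub_distrib]
      congr 1 with s
      ring
    have hmismatch := abs_sum_mul_le_sum_abs_mul (fun s => P i s - P' i s) v
      fun s => (hv s).trans hXbound
    have hcontract := abs_sum_mul_le_mul_of_nonneg (hP' i) (hP'γ i)
      (fmax_abs_nonneg fun i => X i - Y i) hvw
    rw [hsplit]
    exact (abs_add_le _ _).trans <|
      add_le_add (hmismatch.trans (mul_le_mul_of_nonneg_right (hδ i) hRγ)) hcontract
  calc (fmax fun i => |X i - Y i|) ≤ δ * (R / (1 - γ)) / (1 - γ) :=
        fmax_abs_le_div_of_le_add_mul hγ hstep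
    _ = δ * R / (1 - γ) ^ 2 := by rw [mul_div_assoc, div_div, ← sq, ← mul_div_assoc]

end Bellman

theorem mtm_planning_loss_bound_general {S O : Type*} [Fintype S] [Fintype O] [Nonempty S] [Nonempty O]
    (r : S → O → ℝ) (p pI : S → O → S → ℝ)
    (Rmax γbar ζ εhat : ℝ)
    (hr0 : ∀ s o, 0 ≤ r s o) (hrR : ∀ s o, r s o ≤ Rmax)
    (hp : ∀ s o s', 0 ≤ p s o s') (hpI : ∀ s o s', 0 ≤ pI s o s')
    (hγp : ∀ s o, ∑ s' : S, p s o s' ≤ γbar)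
    (hγpI : ∀ s o, ∑ s' : S, pI s o s' ≤ γbar)
    (hγlt : γbar < 1)
    (hζ : fmax (fun so : S × O => ∑ s' : S, |p so.1 so.2 s' - pI so.1 so.2 s'|) ≤ γbar * ζ)
    (Qstar QI : S → O → ℝ)
    (hQstar : ∀ s o, Qstar s o = r s o + ∑ s' : S, p s o s' * fmax (fun o' => Qstar s' o'))
    (hQI : ∀ s o, QI s o = r s o + ∑ s' : S, pI s o s' * fmax (fun o' => QI s' o'))
    (πhat : S → O)
    (VhatM VhatMI : S → ℝ)
    (hVhatM : ∀ s, VhatM s = r s (πhat s) + ∑ s' : S, p s (πhat s) s' * VhatM s')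
    (hVhatMI : ∀ s, VhatMI s = r s (πhat s) + ∑ s' : S, pI s (πhat s) s' * VhatMI s')
    (Vstar VstarMI : S → ℝ)
    (hVstar : ∀ s, Vstar s = fmax (fun o => Qstar s o))
    (hVstarMI : ∀ s, VstarMI s = fmax (fun o => QI s o))
    (hest : fmax (fun s : S => |VstarMI s - VhatMI s|) ≤ εhat) :
    fmax (fun s : S => |Vstar s - VhatM s|) ≤
      4 * γbar * ζ * Rmax / (1 - γbar) ^ 2 + εhat := by
  set K := γbar * ζ * Rmax / (1 - γbar) ^ 2
  have hr : ∀ s o, |r s o| ≤ Rmax := fun s o =>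
    abs_le.2 ⟨by linarith [hr0 s o, hrR s o], hrR s o⟩
  have hTV : ∀ s o, ∑ s', |p s o s' - pI s o s'| ≤ γbar * ζ := fun s o =>
    (le_fmax (fun so : S × O => ∑ s', |p so.1 so.2 s' - pI so.1 so.2 s'|) (s, o)).trans hζ
  have hQ : (fmax fun so : S × O => |Qstar so.1 so.2 - QI so.1 so.2|) ≤ K :=
    fmax_abs_sub_le_of_bellman (fun so => hQstar so.1 so.2) (fun so => hQI so.1 so.2)
      (fun s => (abs_fmax_le_fmax_abs _).trans (fmax_slice_le (fun so => |Qstar so.1 so.2|) s))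
      (abs_fmax_slice_sub_le (fun so => Qstar so.1 so.2) (fun so => QI so.1 so.2))
      (fun so => hr so.1 so.2) (fun so => hp so.1 so.2) (fun so => hpI so.1 so.2)
      (fun so => hγp so.1 so.2) (fun so => hγpI so.1 so.2) hγlt (fun so => hTV so.1 so.2)
  have hπ : (fmax fun s => |VhatM s - VhatMI s|) ≤ K :=
    fmax_abs_sub_le_of_bellman hVhatM hVhatMI (le_fmax _) (le_fmax _)
      (fun s => hr s (πhat s)) (fun s => hp s (πhat s)) (fun s => hpI s (πhat s))
      (fun s => hγp s (πhat s)) (fun s => hγpI s (πhat s)) hγlt (fun s => hTV s (πhat s))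
  have hK : 0 ≤ K := (fmax_abs_nonneg _).trans hπ
  refine fmax_le fun s => ?_
  have hopt : |Vstar s - VstarMI s| ≤ K := by
    rw [hVstar, hVstarMI]
    exact (abs_fmax_slice_sub_le (fun so => Qstar so.1 so.2) (fun so => QI so.1 so.2) s).trans hQ
  have hpol : |VhatMI s - VhatM s| ≤ K :=
    (abs_sub_comm _ _).le.trans ((le_fmax _ s).trans hπ)
  have hestim := (le_fmax (fun s => |VstarMI s - VhatMI s|) s).trans hest
  have hfour : 4 * γbar * ζ * Rmax / (1 - γbar) ^ 2 = 4 * K := by ring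
  linarith [abs_sub_le (Vstar s) (VstarMI s) (VhatM s),
    abs_sub_le (VstarMI s) (VhatMI s) (VhatM s)]

/-- Corollary 3 (multi-time-model-of-intent planning loss), deterministic form. -/
theorem mtm_planning_loss_bound {S O : Type*} [Fintype S] [Fintype O] [Nonempty S] [Nonempty O]
    (r : S → O → ℝ) (p pI phat : S → O → S → ℝ)
    (Rmax γbar ζ εhat : ℝ)
    (hr0 : ∀ s o, 0 ≤ r s o) (hrR : ∀ s o, r s o ≤ Rmax)
    (hp : ∀ s o s', 0 ≤ p s o s') (hpI : ∀ s o s', 0 ≤ pI s o s')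
    (hphat : ∀ s o s', 0 ≤ phat s o s')
    (hγp : ∀ s o, ∑ s' : S, p s o s' ≤ γbar)
    (hγpI : ∀ s o, ∑ s' : S, pI s o s' ≤ γbar)
    (hγphat : ∀ s o, ∑ s' : S, phat s o s' ≤ γbar)
    (hγlt : γbar < 1)
    (hζ : fmax (fun so : S × O => ∑ s' : S, |p so.1 so.2 s' - pI so.1 so.2 s'|) ≤ γbar * ζ)
    (Qstar QI : S → O → ℝ)
    (hQstar : ∀ s o, Qstar s o = r s o + ∑ s' : S, p s o s' * fmax (fun o' => Qstar s' o'))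
    (hQI : ∀ s o, QI s o = r s o + ∑ s' : S, pI s o s' * fmax (fun o' => QI s' o'))
    (πhat : S → O)
    (VhatM VhatMI : S → ℝ)
    (hVhatM : ∀ s, VhatM s = r s (πhat s) + ∑ s' : S, p s (πhat s) s' * VhatM s')
    (hVhatMI : ∀ s, VhatMI s = r s (πhat s) + ∑ s' : S, pI s (πhat s) s' * VhatMI s')
    (Vstar VstarMI : S → ℝ)
    (hVstar : ∀ s, Vstar s = fmax (fun o => Qstar s o))
    (hVstarMI : ∀ s, VstarMI s = fmax (fun o => QI s o))
    (hest : fmax (fun s : S => |VstarMI s - VhatMI s|) ≤ εhat) :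
    fmax (fun s : S => |Vstar s - VhatM s|) ≤
      4 * γbar * ζ * Rmax / (1 - γbar) ^ 2 + εhat :=
  mtm_planning_loss_bound_general r p pI Rmax γbar ζ εhat hr0 hrR hp hpI hγp hγpI hγlt hζ Qstar QI
    hQstar hQI πhat VhatM VhatMI hVhatM hVhatMI Vstar VstarMI hVstar hVstarMI hest
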